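/- Let q be real with 0 < q < 1, and let f : ℂ × ℂ → ℂ be analytic in a neighborhood U of (0,0) ∈ ℂ². Suppose that for all (a,b) ∈ U one has b·f(qa, b) − a·f(a, qb) = (b − a)·f(a,b). Let g : ℂ → ℂ be g(a) = f(a,0). Then there is a neighborhood V ⊆ U of (0,0) such that for all (a,b) ∈ V with a ≠ 0, the series ∑_{n=0}^∞ (b^n/(q;q)_n) · (D_q^n g)(a) converges to f(a,b). -/

import Mathlib

/-!
Expand `f (a, b) = ∑ cₙ(a) bⁿ` in the second variable. Comparing the coefficients of `bⁿ⁺¹` in the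
q-difference equation gives `cₙ(a) - cₙ(qa) = a (1 - qⁿ⁺¹) cₙ₊₁(a)`, i.e.
`D_q cₙ = (1 - qⁿ⁺¹) cₙ₊₁` away from `0`. Since `c₀ = g`, induction gives `D_qⁿ g = (q;q)ₙ cₙ`,
so the series in the theorem is the Taylor series of `b ↦ f (a, b)`.
-/

noncomputable def qPoch (q a : ℂ) (n : ℕ) : ℂ := ∏ j ∈ Finset.range n, (1 - a * q ^ j)

/-- The q-derivative operator: (D_q g)(x) = (g(x) − g(qx))/x. -/
noncomputable def qDeriv (q : ℂ) (g : ℂ → ℂ) : ℂ → ℂ := fun x => (g x - g (q * x)) / x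

open Metric NNReal

lemma qPoch_succ (q a : ℂ) (n : ℕ) : qPoch q a (n + 1) = qPoch q a n * (1 - a * q ^ n) :=
  Finset.prod_range_succ _ _

lemma qPoch_self_ne_zero {q : ℂ} (hq : ‖q‖ < 1) (n : ℕ) : qPoch q q n ≠ 0 := by
  refine Finset.prod_ne_zero_iff.mpr fun j _ hj => ?_
  have hpow : ‖q ^ (j + 1)‖ < 1 := by
    rw [norm_pow]
    exact pow_lt_one₀ (norm_nonneg q) hq (Nat.succ_ne_zero j)
  rw [← pow_succ', sub_eq_zero] at hj
  simp [← hj] at hpow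

lemma iterate_qDeriv_eq_qPoch_mul {q : ℂ} (hq : q ≠ 0) {S : Set ℂ} (hS : ∀ a ∈ S, q * a ∈ S)
    {g : ℂ → ℂ} {c : ℕ → ℂ → ℂ} (hg : ∀ a ∈ S, g a = c 0 a)
    (hc : ∀ a ∈ S, ∀ n, c n a - c n (q * a) = a * (1 - q ^ (n + 1)) * c (n + 1) a) (n : ℕ) :
    ∀ a ∈ S, a ≠ 0 → (qDeriv q)^[n] g a = qPoch q q n * c n a := by
  induction n with
  | zero => intro a ha _; simp [qPoch, hg a ha]
  | succ n ih =>
    intro a ha ha0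
    rw [Function.iterate_succ_apply', qDeriv, ih a ha ha0, ih _ (hS a ha) (mul_ne_zero hq ha0),
      div_eq_iff ha0, qPoch_succ]
    linear_combination qPoch q q n * hc a ha n

lemma eq_zero_of_hasSum_mul_pow {d : ℕ → ℂ}
    (h : ∀ᶠ b in nhds 0, HasSum (fun n => d n * b ^ n) 0) (n : ℕ) : d n = 0 := by
  have hd : HasFPowerSeriesAt (0 : ℂ → ℂ) (FormalMultilinearSeries.ofScalars ℂ d) 0 := by
    rw [hasFPowerSeriesAt_iff]
    filter_upwards [h] with b hb
    simpa [FormalMultilinearSeries.coeff_ofScalars, mul_comm] using hb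
  exact (FormalMultilinearSeries.ofScalars_eq_zero ℂ n).mp (congrFun hd.eq_zero n)

lemma eq_zero_of_hasSum_mul_pow_succ {e : ℕ → ℂ}
    (h : ∀ᶠ b in nhds 0, HasSum (fun n => e n * b ^ (n + 1)) 0) (n : ℕ) : e n = 0 := by
  let d : ℕ → ℂ := fun | 0 => 0 | m + 1 => e m
  refine eq_zero_of_hasSum_mul_pow (d := d) ?_ (n + 1)
  filter_upwards [h] with b hb
  refine (hasSum_nat_add_iff' (f := fun m => d m * b ^ m) 1).mp ?_
  simpa [d] using hb

/-- The `n`-th Taylor coefficient at `0` of `b ↦ f (a, b)`, computed by the Cauchy integral over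
the circle of radius `r`. -/
noncomputable def sliceCoeff (f : ℂ × ℂ → ℂ) (r : ℝ) (n : ℕ) (a : ℂ) : ℂ :=
  (cauchyPowerSeries (fun b => f (a, b)) 0 r).coeff n

section Slice

variable {f : ℂ × ℂ → ℂ} {r : ℝ≥0} (hf : DifferentiableOn ℂ f (closedBall 0 r))
include hf

lemma hasFPowerSeriesOnBall_slice (hr : 0 < r) {a : ℂ} (ha : ‖a‖ ≤ r) :
    HasFPowerSeriesOnBall (fun b => f (a, b)) (cauchyPowerSeries (fun b => f (a, b)) 0 r) 0 r := by
  have hslice : Set.MapsTo (fun b : ℂ => (a, b)) (closedBall 0 r) (closedBall 0 r) := fun b hb => by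
    rw [mem_closedBall_zero_iff] at hb ⊢
    exact (Prod.norm_mk a b).trans_le (max_le ha hb)
  exact (hf.comp ((differentiableOn_const a).prodMk differentiableOn_id) hslice).hasFPowerSeriesOnBall
    hr

lemma hasSum_sliceCoeff_mul_pow (hr : 0 < r) {a b : ℂ} (ha : ‖a‖ ≤ r) (hb : ‖b‖ < r) :
    HasSum (fun n => sliceCoeff f r n a * b ^ n) (f (a, b)) := by
  have hb' : b ∈ eball (0 : ℂ) r := by
    rwa [Metric.eball_coe, mem_ball_zero_iff]
  simpa [FormalMultilinearSeries.apply_eq_pow_smul_coeff, mul_comm, sliceCoeff] using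
    (hasFPowerSeriesOnBall_slice hf hr ha).hasSum hb'

lemma sliceCoeff_zero (hr : 0 < r) {a : ℂ} (ha : ‖a‖ ≤ r) : sliceCoeff f r 0 a = f (a, 0) :=
  (hasFPowerSeriesOnBall_slice hf hr ha).coeff_zero fun _ => 1

/-- Coefficient of `bⁿ⁺¹` in `b (f (qa, b) - f (a, b)) = a (f (a, qb) - f (a, b))`. -/
lemma sliceCoeff_sub_sliceCoeff_mul (hr : 0 < r) {q : ℂ} (hq : ‖q‖ ≤ 1)
    (heq : ∀ a b : ℂ, (a, b) ∈ closedBall (0 : ℂ × ℂ) r →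
      b * f (q * a, b) - a * f (a, q * b) = (b - a) * f (a, b))
    {a : ℂ} (ha : ‖a‖ ≤ r) (n : ℕ) :
    sliceCoeff f r n a - sliceCoeff f r n (q * a)
      = a * (1 - q ^ (n + 1)) * sliceCoeff f r (n + 1) a := by
  set c := sliceCoeff f r
  have hqa : ‖q * a‖ ≤ r := by
    rw [norm_mul]; exact (mul_le_of_le_one_left (norm_nonneg a) hq).trans ha
  suffices ∀ m, c m (q * a) - c m a - a * (q ^ (m + 1) - 1) * c (m + 1) a = 0 by
    linear_combination -this n
  refine eq_zero_of_hasSum_mul_pow_succ ?_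
  filter_upwards [ball_mem_nhds (0 : ℂ) (NNReal.coe_pos.mpr hr)] with b hb
  rw [mem_ball_zero_iff] at hb
  have hqb : ‖q * b‖ < r := by
    rw [norm_mul]; exact (mul_le_of_le_one_left (norm_nonneg b) hq).trans_lt hb
  have hab : (a, b) ∈ closedBall (0 : ℂ × ℂ) r := by
    rw [mem_closedBall_zero_iff, Prod.norm_mk]; exact max_le ha hb.le
  have hc : ∀ {a' b' : ℂ}, ‖a'‖ ≤ r → ‖b'‖ < r → HasSum (fun n => c n a' * b' ^ n) (f (a', b')) :=
    hasSum_sliceCoeff_mul_pow hf hr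
  have hlhs : HasSum (fun m => (c m (q * a) - c m a) * b ^ (m + 1))
      (b * (f (q * a, b) - f (a, b))) := by
    refine (((hc hqa hb).sub (hc ha hb)).mul_left b).congr_fun fun m => ?_
    ring
  have hrhs : HasSum (fun m => a * (q ^ m - 1) * c m a * b ^ m)
      (a * (f (a, q * b) - f (a, b))) := by
    refine (((hc ha hqb).sub (hc ha hb)).mul_left a).congr_fun fun m => ?_
    ring
  rw [← hasSum_nat_add_iff' 1, Finset.sum_range_one, pow_zero, sub_self, mul_zero, zero_mul,
    zero_mul, sub_zero] at hrhs
  have hzero : b * (f (q * a, b) - f (a, b)) - a * (f (a, q * b) - f (a, b)) = 0 := by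
    linear_combination heq a b hab
  exact hzero ▸ (hlhs.sub hrhs).congr_fun fun m => by ring

end Slice

/-- Liu's q-difference equation characterization (first operator). -/
theorem stmt18 (q : ℝ) (hq0 : 0 < q) (hq1 : q < 1)
    (f : ℂ × ℂ → ℂ) (U : Set (ℂ × ℂ)) (hU : U ∈ nhds ((0 : ℂ), (0 : ℂ)))
    (hf : AnalyticOnNhd ℂ f U)
    (heq : ∀ a b : ℂ, (a, b) ∈ U →
      b * f ((q : ℂ) * a, b) - a * f (a, (q : ℂ) * b) = (b - a) * f (a, b))
    (g : ℂ → ℂ) (hg : ∀ a : ℂ, g a = f (a, 0)) :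
    ∃ V : Set (ℂ × ℂ), V ∈ nhds ((0 : ℂ), (0 : ℂ)) ∧ V ⊆ U ∧
      ∀ a b : ℂ, (a, b) ∈ V → a ≠ 0 →
        HasSum (fun n : ℕ =>
          b ^ n / qPoch (q : ℂ) (q : ℂ) n * ((qDeriv (q : ℂ))^[n] g a)) (f (a, b)) := by
  obtain ⟨ρ, hρ, hρU⟩ := nhds_basis_closedBall.mem_iff.mp hU
  lift ρ to ℝ≥0 using hρ.le
  have hr : 0 < ρ := NNReal.coe_pos.mp hρ
  have hfρ : DifferentiableOn ℂ f (closedBall 0 ρ) := hf.differentiableOn.mono hρU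
  have hqn : ‖(q : ℂ)‖ = q := by rw [Complex.norm_real, Real.norm_of_nonneg hq0.le]
  have hD : ∀ n, ∀ a ∈ closedBall (0 : ℂ) ρ, a ≠ 0 →
      (qDeriv (q : ℂ))^[n] g a = qPoch q q n * sliceCoeff f ρ n a := by
    refine iterate_qDeriv_eq_qPoch_mul (mod_cast hq0.ne') (fun a ha => ?_) (fun a ha => ?_)
      fun a ha => sliceCoeff_sub_sliceCoeff_mul hfρ hr (hqn.le.trans hq1.le)
        (fun a b hab => heq a b (hρU hab)) (mem_closedBall_zero_iff.mp ha)
    · rw [mem_closedBall_zero_iff, norm_mul, hqn] at ⊢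
      rw [mem_closedBall_zero_iff] at ha
      exact (mul_le_of_le_one_left (norm_nonneg a) hq1.le).trans ha
    · rw [hg, sliceCoeff_zero hfρ hr (mem_closedBall_zero_iff.mp ha)]
  refine ⟨ball 0 ρ, ball_mem_nhds _ hρ, ball_subset_closedBall.trans hρU, fun a b hab ha0 => ?_⟩
  rw [mem_ball_zero_iff, Prod.norm_mk, max_lt_iff] at hab
  convert hasSum_sliceCoeff_mul_pow hfρ hr hab.1.le hab.2 using 1
  ext n
  rw [hD n a (mem_closedBall_zero_iff.mpr hab.1.le) ha0]
  field_simp [qPoch_self_ne_zero (hqn.trans_lt hq1) n]
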